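/- arXiv:1509.00273 — 2 statements merged into one kernel-verified Lean document; each statement's English description precedes it below -/
import Mathlib

section
/- Let w, σ be weights and 0 < r < p < ∞ with p > 1, and let 𝒮 be a sparse collection of dyadic cubes in ℝ^n. Then ‖A_𝒮^r(·σ)‖_{L^p(σ)→L^p(w)}^r ≃ sup over measurable f ≥ 0 with ‖f‖_{L^p(σ)} = 1 of ‖∑_{Q∈𝒮} ⟨σ⟩_Q^r ⟨f^r⟩_Q^σ 1_Q‖_{L^{p/r}(w)}, with implied constants depending only on n, p and r. -/
open MeasureTheory ENNReal NNReal Set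

noncomputable section

namespace Paper

abbrev Rn (n : ℕ) := Fin n → ℝ

/-- A dyadic cube in `ℝⁿ`: `∏ᵢ [2^{-k} mᵢ, 2^{-k}(mᵢ+1))`. -/
def IsDyadicCube (n : ℕ) (Q : Set (Rn n)) : Prop :=
  ∃ (k : ℤ) (m : Fin n → ℤ), Q =
    {x : Rn n | ∀ i, (2:ℝ) ^ (-k) * m i ≤ x i ∧ x i < (2:ℝ) ^ (-k) * (m i + 1)}

/-- A sparse collection of dyadic cubes. -/
def IsSparse (n : ℕ) (S : Set (Set (Rn n))) : Prop :=
  (∀ Q ∈ S, IsDyadicCube n Q) ∧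
  ∃ E : Set (Rn n) → Set (Rn n),
    (∀ Q ∈ S, E Q ⊆ Q ∧ MeasurableSet (E Q) ∧ volume Q ≤ 2 * volume (E Q)) ∧
    S.Pairwise (fun Q Q' => Disjoint (E Q) (E Q'))

/-- Average `⟨w⟩_Q = |Q|⁻¹ ∫_Q w`. -/
def dAvg {n : ℕ} (w : Rn n → ℝ≥0∞) (Q : Set (Rn n)) : ℝ≥0∞ :=
  (volume Q)⁻¹ * ∫⁻ x in Q, w x

/-- Weighted average `⟨f⟩_Q^σ = σ(Q)⁻¹ ∫_Q f σ`. -/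
def dAvgW {n : ℕ} (σ f : Rn n → ℝ≥0∞) (Q : Set (Rn n)) : ℝ≥0∞ :=
  (∫⁻ x in Q, σ x)⁻¹ * ∫⁻ x in Q, f x * σ x

/-- Local integrability (w.r.t. dyadic cubes). -/
def LocInt {n : ℕ} (w : Rn n → ℝ≥0∞) : Prop :=
  ∀ Q : Set (Rn n), IsDyadicCube n Q → (∫⁻ x in Q, w x) < ∞

/-- The sparse operator `A_𝒮^r g = (∑_{Q∈𝒮} ⟨g⟩_Q^r 1_Q)^{1/r}`. -/
def sparseOp {n : ℕ} (S : Set (Set (Rn n))) (r : ℝ) (g : Rn n → ℝ≥0∞) (x : Rn n) : ℝ≥0∞ :=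
  (∑' Q : S, (Q : Set (Rn n)).indicator (fun _ => (dAvg g Q) ^ r) x) ^ (1 / r)

/-- `‖g‖_{L^p(w)} = (∫ g^p w)^{1/p}`. -/
def lpNorm {n : ℕ} (p : ℝ) (w g : Rn n → ℝ≥0∞) : ℝ≥0∞ :=
  (∫⁻ x, (g x) ^ p * w x) ^ (1 / p)

/-- `‖g‖_{L^{p,∞}(w)} = sup_{t>0} t · w({g > t})^{1/p}`. -/
def wLpNorm {n : ℕ} (p : ℝ) (w g : Rn n → ℝ≥0∞) : ℝ≥0∞ :=
  ⨆ (t : ℝ≥0) (_ : 0 < t), (t : ℝ≥0∞) * (∫⁻ x in {x | (t : ℝ≥0∞) < g x}, w x) ^ (1 / p)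

/-- `‖A_𝒮^r(·σ)‖_{L^p(σ)→L^p(w)}`, the least constant in the strong-type bound. -/
def opNormStrong {n : ℕ} (S : Set (Set (Rn n))) (r p : ℝ) (w σ : Rn n → ℝ≥0∞) : ℝ≥0∞ :=
  sInf {C : ℝ≥0∞ | ∀ f : Rn n → ℝ≥0∞, Measurable f →
    lpNorm p w (sparseOp S r (fun x => f x * σ x)) ≤ C * lpNorm p σ f}

/-- `‖A_𝒮^r(·σ)‖_{L^p(σ)→L^{p,∞}(w)}`, the least constant in the weak-type bound. -/
def opNormWeak {n : ℕ} (S : Set (Set (Rn n))) (r p : ℝ) (w σ : Rn n → ℝ≥0∞) : ℝ≥0∞ :=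
  sInf {C : ℝ≥0∞ | ∀ f : Rn n → ℝ≥0∞, Measurable f →
    wLpNorm p w (sparseOp S r (fun x => f x * σ x)) ≤ C * lpNorm p σ f}

/-- Two-weight (dyadic) `A_p` characteristic. -/
def ApChar {n : ℕ} (p : ℝ) (w σ : Rn n → ℝ≥0∞) : ℝ≥0∞ :=
  ⨆ (Q : Set (Rn n)) (_ : IsDyadicCube n Q), dAvg w Q * (dAvg σ Q) ^ (p - 1)

/-- Dyadic maximal operator. -/
def dyadicM {n : ℕ} (g : Rn n → ℝ≥0∞) (x : Rn n) : ℝ≥0∞ :=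
  ⨆ (Q : Set (Rn n)) (_ : IsDyadicCube n Q ∧ x ∈ Q), dAvg g Q

/-- Fujii–Wilson (dyadic) `A_∞` characteristic. -/
def AinfChar {n : ℕ} (w : Rn n → ℝ≥0∞) : ℝ≥0∞ :=
  ⨆ (Q : Set (Rn n)) (_ : IsDyadicCube n Q),
    (∫⁻ x in Q, w x)⁻¹ * ∫⁻ x in Q, dyadicM (Q.indicator w) x

/-- The testing constant `𝒯_s` (Theorem 1.4 uses `s = r`). -/
def testT {n : ℕ} (S : Set (Set (Rn n))) (p s : ℝ) (w σ : Rn n → ℝ≥0∞) : ℝ≥0∞ :=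
  ⨆ (R : Set (Rn n)) (_ : R ∈ S),
    (∫⁻ x in R, σ x) ^ (-(s / p)) *
      lpNorm (p / s) w (fun x => ∑' Q : {Q : Set (Rn n) // Q ∈ S ∧ Q ⊆ R},
        (Q : Set (Rn n)).indicator (fun _ => (dAvg σ Q) ^ s) x)

/-- The dual testing constant `𝒯*`. -/
def testTstar {n : ℕ} (S : Set (Set (Rn n))) (p r : ℝ) (w σ : Rn n → ℝ≥0∞) : ℝ≥0∞ :=
  ⨆ (R : Set (Rn n)) (_ : R ∈ S),
    (∫⁻ x in R, w x) ^ (-(1 - r / p)) *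
      lpNorm ((p / r) / (p / r - 1)) σ (fun x => ∑' Q : {Q : Set (Rn n) // Q ∈ S ∧ Q ⊆ R},
        (Q : Set (Rn n)).indicator (fun _ => (dAvg σ Q) ^ (r - 1) * dAvg w Q) x)

/-!
Let `M` be the dyadic maximal operator with respect to the measure `σ dx`. It is of weak type
`(1, 1)` with constant `1`, because the maximal dyadic cubes of a level set are disjoint, and a
dyadic layer-cake summation then bounds it on `L^q(σ)` for every `q > 1`, with a constant
depending only on `q`.

On a dyadic cube `Q` we have `⟨fσ⟩_Q = ⟨σ⟩_Q ⟨f⟩_Q^σ`, and `(⟨f⟩_Q^σ)^s ≤ ⟨(Mf)^s⟩_Q^σ` for every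
`s > 0` since `Mf ≥ ⟨f⟩_Q^σ` on `Q`. With `s = r` this dominates `(A_𝒮^r(fσ))^r` pointwise by the
weighted sparse sum of `Mf`, and normalising `Mf` in `L^p(σ)` gives the upper bound. With
`s = 1/r`, applied to `f^r`, it dominates the weighted sparse sum of `f` by `(A_𝒮^r(hσ))^r` for
`h = (M(f^r))^{1/r}`, and `‖h‖_{L^p(σ)} ≲ ‖f‖_{L^p(σ)}` because `p/r > 1`; this gives the lower
bound.
-/

section Averages

variable {α : Type*} [MeasurableSpace α] {μ : Measure α}

lemma mul_measure_le_setLIntegral_of_lt_setLAverage {s : Set α} {g : α → ℝ≥0∞} {t : ℝ≥0∞}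
    (h : t < ⨍⁻ y in s, g y ∂μ) : t * μ s ≤ ∫⁻ y in s, g y ∂μ := by
  have hs : μ s ≠ ∞ := by
    rintro hs
    simp [setLAverage_eq, hs] at h
  rw [← measure_mul_setLAverage g hs, mul_comm]
  exact mul_le_mul_right h.le _

lemma setLAverage_add_const_le (s : Set α) (g : α → ℝ≥0∞) (c : ℝ≥0∞) :
    ⨍⁻ y in s, (g y + c) ∂μ ≤ ⨍⁻ y in s, g y ∂μ + c := by
  rw [setLAverage_eq, setLAverage_eq, lintegral_add_right _ measurable_const, setLIntegral_const,
    ENNReal.add_div]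
  gcongr
  exact ENNReal.div_le_of_le_mul le_rfl

lemma le_setLAverage_of_forall_le {s : Set α} {g : α → ℝ≥0∞} {c : ℝ≥0∞} (hs : MeasurableSet s)
    (h0 : μ s ≠ 0) (htop : μ s ≠ ∞) (h : ∀ y ∈ s, c ≤ g y) : c ≤ ⨍⁻ y in s, g y ∂μ :=
  (setLAverage_const h0 htop c).symm.trans_le (laverage_mono_ae (ae_restrict_of_forall_mem hs h))

end Averages

section DyadicCubes

variable {n : ℕ}

def dyadicCube (n : ℕ) (k : ℤ) (m : Fin n → ℤ) : Set (Rn n) :=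
  {x : Rn n | ∀ i, (2:ℝ) ^ (-k) * m i ≤ x i ∧ x i < (2:ℝ) ^ (-k) * (m i + 1)}

lemma isDyadicCube_iff {Q : Set (Rn n)} : IsDyadicCube n Q ↔ ∃ k m, Q = dyadicCube n k m :=
  Iff.rfl

lemma mem_dyadicCube_iff {k : ℤ} {m : Fin n → ℤ} {x : Rn n} :
    x ∈ dyadicCube n k m ↔ ∀ i, ⌊(2:ℝ) ^ k * x i⌋ = m i := by
  have h2 : (0:ℝ) < 2 ^ k := by positivity
  simp only [dyadicCube, Set.mem_ofPred_eq, Int.floor_eq_iff, zpow_neg, inv_mul_le_iff₀ h2,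
    lt_inv_mul_iff₀ h2]

lemma floor_two_zpow_mul_eq_div {k k' : ℤ} (hk : k ≤ k') (y : ℝ) :
    ⌊(2:ℝ) ^ k * y⌋ = ⌊(2:ℝ) ^ k' * y⌋ / ((2 ^ (k' - k).toNat : ℕ) : ℤ) := by
  rw [← Int.floor_div_natCast]
  congr 1
  push_cast
  rw [← zpow_natCast, Int.toNat_of_nonneg (by omega), mul_div_right_comm, ← zpow_sub₀ two_ne_zero]
  ring_nf

lemma dyadicCube_subset_of_le {k k' : ℤ} (hk : k ≤ k') {m m' : Fin n → ℤ} {x : Rn n}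
    (hx : x ∈ dyadicCube n k m) (hx' : x ∈ dyadicCube n k' m') :
    dyadicCube n k' m' ⊆ dyadicCube n k m := by
  intro z hz
  rw [mem_dyadicCube_iff] at hx hx' hz ⊢
  intro i
  rw [← hx i, floor_two_zpow_mul_eq_div hk, floor_two_zpow_mul_eq_div hk, hz i, hx' i]

lemma measurableSet_dyadicCube (k : ℤ) (m : Fin n → ℤ) : MeasurableSet (dyadicCube n k m) := by
  have : dyadicCube n k m = Set.pi Set.univ
      (fun i => Ico ((2:ℝ) ^ (-k) * m i) ((2:ℝ) ^ (-k) * (m i + 1))) := by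
    ext x; simp [dyadicCube, Set.mem_pi]
  rw [this]
  exact MeasurableSet.univ_pi fun i => measurableSet_Ico

lemma countable_setOf_isDyadicCube : {Q : Set (Rn n) | IsDyadicCube n Q}.Countable := by
  have : {Q : Set (Rn n) | IsDyadicCube n Q}
      = Set.range (fun km : ℤ × (Fin n → ℤ) => dyadicCube n km.1 km.2) := by
    ext Q; simp [isDyadicCube_iff, eq_comm]
  rw [this]
  exact Set.countable_range _

end DyadicCubes

section DyadicMaximal

variable {n : ℕ} (μ : Measure (Rn n))

-- Unlike `dyadicM`, the averages are taken with respect to `μ`; it is used with `μ = σ dx`.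
def dyadicMax (g : Rn n → ℝ≥0∞) (x : Rn n) : ℝ≥0∞ :=
  ⨆ km : ℤ × (Fin n → ℤ), (dyadicCube n km.1 km.2).indicator
    (fun _ => ⨍⁻ y in dyadicCube n km.1 km.2, g y ∂μ) x

lemma measurable_dyadicMax (g : Rn n → ℝ≥0∞) : Measurable (dyadicMax μ g) :=
  Measurable.iSup fun _ => measurable_const.indicator (measurableSet_dyadicCube _ _)

variable {μ}

lemma setLAverage_le_dyadicMax {g : Rn n → ℝ≥0∞} {k : ℤ} {m : Fin n → ℤ} {x : Rn n}
    (hx : x ∈ dyadicCube n k m) : ⨍⁻ y in dyadicCube n k m, g y ∂μ ≤ dyadicMax μ g x := by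
  refine le_trans ?_ (le_iSup _ (k, m))
  rw [Set.indicator_of_mem hx]

-- `C` consists of the maximal cubes of the family: two of them that meet are nested, hence equal.
lemma exists_pairwiseDisjoint_sUnion_eq (P : ℤ → (Fin n → ℤ) → Prop) {N : ℤ}
    (hP : ∀ k m, P k m → N ≤ k) :
    ∃ C : Set (Set (Rn n)), C.PairwiseDisjoint id ∧
      (∀ Q ∈ C, ∃ k m, P k m ∧ Q = dyadicCube n k m) ∧
      ⋃₀ C = ⋃ (k) (m) (_ : P k m), dyadicCube n k m := by
  set U := ⋃ (k) (m) (_ : P k m), dyadicCube n k m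
  have hleast : ∀ x ∈ U, ∃ k m, P k m ∧ x ∈ dyadicCube n k m ∧
      ∀ k' m', P k' m' → x ∈ dyadicCube n k' m' → k ≤ k' := by
    intro x hx
    simp only [U, Set.mem_iUnion] at hx
    obtain ⟨k₀, m₀, hP₀, hx₀⟩ := hx
    obtain ⟨k, ⟨m, hPm, hxm⟩, hk⟩ := Int.exists_least_of_bdd
      (P := fun k => ∃ m, P k m ∧ x ∈ dyadicCube n k m)
      ⟨N, fun k ⟨m, hPm, _⟩ => hP k m hPm⟩ ⟨k₀, m₀, hP₀, hx₀⟩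
    exact ⟨k, m, hPm, hxm, fun k' m' hP' hx' => hk k' ⟨m', hP', hx'⟩⟩
  choose k m hPkm hmem hmin using hleast
  have hnested : ∀ x hx y hy z, k x hx ≤ k y hy → z ∈ dyadicCube n (k x hx) (m x hx) →
      z ∈ dyadicCube n (k y hy) (m y hy) →
      dyadicCube n (k x hx) (m x hx) = dyadicCube n (k y hy) (m y hy) := by
    intro x hx y hy z hxy hzx hzy
    have hsub := dyadicCube_subset_of_le hxy hzx hzy
    have hyx := hmin y hy _ _ (hPkm x hx) (hsub (hmem y hy))
    exact (dyadicCube_subset_of_le hyx hzy hzx).antisymm hsub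
  refine ⟨{Q | ∃ x hx, Q = dyadicCube n (k x hx) (m x hx)}, ?_, ?_, ?_⟩
  · rintro _ ⟨x, hx, rfl⟩ _ ⟨y, hy, rfl⟩ hne
    refine Set.disjoint_left.mpr fun z hzx hzy => hne ?_
    rcases le_total (k x hx) (k y hy) with hxy | hyx
    · exact hnested x hx y hy z hxy hzx hzy
    · exact (hnested y hy x hx z hyx hzy hzx).symm
  · rintro _ ⟨x, hx, rfl⟩
    exact ⟨_, _, hPkm x hx, rfl⟩
  · refine Set.Subset.antisymm ?_ fun x hx => ⟨_, ⟨x, hx, rfl⟩, hmem x hx⟩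
    rintro z ⟨_, ⟨x, hx, rfl⟩, hz⟩
    simp only [U, Set.mem_iUnion]
    exact ⟨_, _, hPkm x hx, hz⟩

lemma mul_measure_iUnion_le_lintegral (g : Rn n → ℝ≥0∞) (t : ℝ≥0∞) (N : ℤ) :
    t * μ (⋃ (k) (m) (_ : N ≤ k ∧ t < ⨍⁻ y in dyadicCube n k m, g y ∂μ), dyadicCube n k m)
      ≤ ∫⁻ x, g x ∂μ := by
  obtain ⟨C, hdisj, hC, hCU⟩ := exists_pairwiseDisjoint_sUnion_eq
    (fun k m => N ≤ k ∧ t < ⨍⁻ y in dyadicCube n k m, g y ∂μ) fun k m h => h.1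
  have hCm : ∀ Q ∈ C, MeasurableSet Q := by
    intro Q hQ
    obtain ⟨k, m, -, rfl⟩ := hC Q hQ
    exact measurableSet_dyadicCube k m
  have hCc : C.Countable := countable_setOf_isDyadicCube.mono fun Q hQ => by
    obtain ⟨k, m, -, rfl⟩ := hC Q hQ
    exact ⟨k, m, rfl⟩
  rw [← hCU, Set.sUnion_eq_biUnion]
  calc t * μ (⋃ Q ∈ C, id Q) = ∑' Q : C, t * μ Q := by
        rw [measure_biUnion hCc hdisj hCm, ENNReal.tsum_mul_left]; rfl
  _ ≤ ∑' Q : C, ∫⁻ x in Q, g x ∂μ := ENNReal.tsum_le_tsum fun ⟨Q, hQ⟩ => by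
        obtain ⟨k, m, hkm, rfl⟩ := hC Q hQ
        exact mul_measure_le_setLIntegral_of_lt_setLAverage hkm.2
  _ = ∫⁻ x in ⋃ Q ∈ C, id Q, g x ∂μ := (lintegral_biUnion hCc hCm hdisj _).symm
  _ ≤ ∫⁻ x, g x ∂μ := setLIntegral_le_lintegral _ _

theorem mul_measure_lt_dyadicMax_le (g : Rn n → ℝ≥0∞) (t : ℝ≥0∞) :
    t * μ {x | t < dyadicMax μ g x} ≤ ∫⁻ x, g x ∂μ := by
  let G : ℕ → Set (Rn n) := fun N =>
    ⋃ (k) (m) (_ : -(N:ℤ) ≤ k ∧ t < ⨍⁻ y in dyadicCube n k m, g y ∂μ), dyadicCube n k m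
  have hG : {x | t < dyadicMax μ g x} = ⋃ N, G N := by
    ext x
    simp only [Set.mem_ofPred_eq, Set.mem_iUnion, G]
    constructor
    · intro hx
      obtain ⟨⟨k, m⟩, hkm⟩ := lt_iSup_iff.mp hx
      have hxQ : x ∈ dyadicCube n k m := by
        by_contra hxQ
        simp [Set.indicator_of_notMem hxQ] at hkm
      rw [Set.indicator_of_mem hxQ] at hkm
      exact ⟨(-k).toNat, k, m, ⟨by omega, hkm⟩, hxQ⟩
    · rintro ⟨N, k, m, ⟨-, hkm⟩, hxQ⟩
      exact hkm.trans_le (setLAverage_le_dyadicMax hxQ)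
  have hmono : Monotone G := by
    intro N N' hNN' x hx
    simp only [G, Set.mem_iUnion] at hx ⊢
    obtain ⟨k, m, ⟨hk, hkm⟩, hxQ⟩ := hx
    exact ⟨k, m, ⟨by omega, hkm⟩, hxQ⟩
  rw [hG, hmono.measure_iUnion, ENNReal.mul_iSup]
  exact iSup_le fun N => mul_measure_iUnion_le_lintegral g t _

lemma dyadicMax_le_dyadicMax_indicator_add (g : Rn n → ℝ≥0∞) (t : ℝ≥0∞) (x : Rn n) :
    dyadicMax μ g x ≤ dyadicMax μ ({y | t < g y}.indicator g) x + t := by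
  refine iSup_le fun ⟨k, m⟩ => ?_
  by_cases hx : x ∈ dyadicCube n k m
  · have hg : ∀ y, g y ≤ {y | t < g y}.indicator g y + t := by
      intro y
      by_cases hy : t < g y
      · simp [Set.indicator_of_mem (show y ∈ {y | t < g y} from hy)]
      · exact (not_lt.mp hy).trans le_add_self
    rw [Set.indicator_of_mem hx]
    calc ⨍⁻ y in dyadicCube n k m, g y ∂μ
        ≤ ⨍⁻ y in dyadicCube n k m, ({y | t < g y}.indicator g y + t) ∂μ :=
          setLAverage_mono_ae _ (Filter.Eventually.of_forall hg)
    _ ≤ ⨍⁻ y in dyadicCube n k m, {y | t < g y}.indicator g y ∂μ + t :=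
          setLAverage_add_const_le _ _ _
    _ ≤ _ := by gcongr; exact setLAverage_le_dyadicMax hx
  · simp [Set.indicator_of_notMem hx]

/-- The weak-type bound applied to the part of `g` above `t`. -/
theorem measure_two_mul_lt_dyadicMax_le (g : Rn n → ℝ≥0∞) {t : ℝ≥0∞} (ht0 : t ≠ 0)
    (httop : t ≠ ∞) :
    μ {x | 2 * t < dyadicMax μ g x} ≤ t⁻¹ * ∫⁻ x, {y | t < g y}.indicator g x ∂μ := by
  have hsub : {x | 2 * t < dyadicMax μ g x}
      ⊆ {x | t < dyadicMax μ ({y | t < g y}.indicator g) x} := by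
    intro x hx
    by_contra hle
    have := (dyadicMax_le_dyadicMax_indicator_add g t x).trans (add_le_add_left (not_lt.mp hle) t)
    exact (not_lt.mpr (two_mul t ▸ this)) hx
  calc μ {x | 2 * t < dyadicMax μ g x}
      ≤ t⁻¹ * (t * μ {x | t < dyadicMax μ ({y | t < g y}.indicator g) x}) := by
        rw [ENNReal.inv_mul_cancel_left ht0 httop]
        exact measure_mono hsub
  _ ≤ _ := by gcongr; exact mul_measure_lt_dyadicMax_le _ t

end DyadicMaximal

section DyadicLayerCake

lemma tsum_int_le_mul_geometric {φ : ℤ → ℝ≥0∞} {J : ℤ} {a ρ : ℝ≥0∞}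
    (h0 : ∀ j, J < j → φ j = 0) (hle : ∀ i : ℕ, φ (J - i) ≤ a * ρ ^ i) :
    ∑' j, φ j ≤ a * (1 - ρ)⁻¹ := by
  have hinj : Function.Injective fun i : ℕ => J - i := fun i i' h => by simpa using h
  have hsupp : Function.support φ ⊆ Set.range fun i : ℕ => J - i := by
    intro j hj
    have hjJ : j ≤ J := not_lt.mp fun h => hj (h0 j h)
    exact ⟨(J - j).toNat, by simp only; omega⟩
  rw [← hinj.tsum_eq hsupp, ← ENNReal.tsum_geometric, ← ENNReal.tsum_mul_left]
  exact ENNReal.tsum_le_tsum hle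

-- Discrete layer cake: `∑_{2^j < a} (2^j)^s` is comparable to `a^s`.
lemma rpow_le_four_rpow_mul_tsum {a : ℝ≥0∞} {s : ℝ} (hs : 0 < s) :
    a ^ s ≤ 4 ^ s * ∑' j : ℤ, if 2 * 2 ^ j < a then ((2:ℝ≥0∞) ^ j) ^ s else 0 := by
  rcases eq_or_ne a 0 with rfl | ha0
  · simp [ENNReal.zero_rpow_of_pos hs]
  rcases eq_or_ne a ∞ with rfl | hatop
  · suffices h : ∑' j : ℤ, (if 2 * 2 ^ j < ∞ then ((2:ℝ≥0∞) ^ j) ^ s else 0) = ∞ by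
      rw [h, ENNReal.mul_top (by positivity)]
      exact le_top
    refine top_unique ?_
    calc (∞ : ℝ≥0∞) = ∑' _ : ℕ, 1 := (ENNReal.tsum_const_eq_top_of_ne_zero one_ne_zero).symm
    _ ≤ ∑' i : ℕ, if 2 * 2 ^ (i : ℤ) < ∞ then ((2:ℝ≥0∞) ^ (i : ℤ)) ^ s else 0 :=
        ENNReal.tsum_le_tsum fun i => by
          rw [if_pos (by simp [ENNReal.mul_lt_top]), zpow_natCast]
          exact ENNReal.one_le_rpow (one_le_pow₀ one_le_two) hs
    _ ≤ _ := ENNReal.tsum_comp_le_tsum_of_injective Nat.cast_injective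
      (fun j : ℤ => if 2 * 2 ^ j < ∞ then ((2:ℝ≥0∞) ^ j) ^ s else 0)
  obtain ⟨J, hJa, haJ⟩ := ENNReal.exists_mem_Ioc_zpow ha0 hatop one_lt_two ENNReal.ofNat_ne_top
  have h2 : (2:ℝ≥0∞) ≠ 0 := two_ne_zero
  have h2' : (2:ℝ≥0∞) ≠ ∞ := ENNReal.ofNat_ne_top
  have hlt : 2 * 2 ^ (J - 1) < a := calc
    2 * 2 ^ (J - 1) = (2:ℝ≥0∞) ^ (J - 1 + 1) := by rw [ENNReal.zpow_add h2 h2', zpow_one, mul_comm]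
    _ < a := by rwa [sub_add_cancel]
  calc a ^ s ≤ ((2:ℝ≥0∞) ^ (J + 1)) ^ s := ENNReal.rpow_le_rpow haJ hs.le
  _ = 4 ^ s * ((2:ℝ≥0∞) ^ (J - 1)) ^ s := by
      rw [← ENNReal.mul_rpow_of_nonneg _ _ hs.le, show J + 1 = 2 + (J - 1) by ring,
        ENNReal.zpow_add h2 h2']
      norm_num
  _ ≤ _ := by
      gcongr
      refine le_trans ?_ (ENNReal.le_tsum (J - 1))
      rw [if_pos hlt]

lemma tsum_ite_zpow_lt_le {b : ℝ≥0∞} {s : ℝ} (hs : 0 < s) :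
    ∑' j : ℤ, (if 2 ^ j < b then ((2:ℝ≥0∞) ^ j) ^ s else 0) ≤ (1 - 2 ^ (-s))⁻¹ * b ^ s := by
  rcases eq_or_ne b 0 with rfl | hb0
  · simp
  rcases eq_or_ne b ∞ with rfl | hbtop
  · rw [ENNReal.top_rpow_of_pos hs, ENNReal.mul_top (ENNReal.inv_ne_zero.mpr
      (ne_top_of_le_ne_top ENNReal.one_ne_top tsub_le_self))]
    exact le_top
  obtain ⟨J, hJb, hbJ⟩ := ENNReal.exists_mem_Ioc_zpow hb0 hbtop one_lt_two ENNReal.ofNat_ne_top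
  have h2 : (2:ℝ≥0∞) ≠ 0 := two_ne_zero
  have h2' : (2:ℝ≥0∞) ≠ ∞ := ENNReal.ofNat_ne_top
  have hvanish : ∀ j, J < j → (if 2 ^ j < b then ((2:ℝ≥0∞) ^ j) ^ s else 0) = 0 := by
    intro j hj
    rw [if_neg (not_lt.mpr (hbJ.trans (ENNReal.zpow_le_of_le one_le_two (by omega))))]
  have hgeom : ∀ i : ℕ, (if 2 ^ (J - i) < b then ((2:ℝ≥0∞) ^ (J - i)) ^ s else 0)
      ≤ ((2:ℝ≥0∞) ^ J) ^ s * (2 ^ (-s)) ^ i := by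
    intro i
    split_ifs
    · rw [← ENNReal.rpow_intCast_mul, ← ENNReal.rpow_intCast_mul, ← ENNReal.rpow_natCast,
        ← ENNReal.rpow_mul, ← ENNReal.rpow_add _ _ h2 h2']
      push_cast
      ring_nf
      exact le_rfl
    · exact zero_le
  calc _ ≤ ((2:ℝ≥0∞) ^ J) ^ s * (1 - 2 ^ (-s))⁻¹ := tsum_int_le_mul_geometric hvanish hgeom
  _ ≤ b ^ s * (1 - 2 ^ (-s))⁻¹ := by gcongr
  _ = _ := mul_comm _ _

lemma tsum_zpow_rpow_mul_ite_le {b : ℝ≥0∞} {q : ℝ} (hq : 1 < q) :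
    ∑' j : ℤ, ((2:ℝ≥0∞) ^ j) ^ q * ((2 ^ j)⁻¹ * if 2 ^ j < b then b else 0)
      ≤ (1 - 2 ^ (1 - q))⁻¹ * b ^ q := by
  have hterm : ∀ j : ℤ, ((2:ℝ≥0∞) ^ j) ^ q * ((2 ^ j)⁻¹ * if 2 ^ j < b then b else 0)
      = (if 2 ^ j < b then ((2:ℝ≥0∞) ^ j) ^ (q - 1) else 0) * b := by
    intro j
    split_ifs
    · rw [ENNReal.rpow_sub _ _ (ENNReal.zpow_pos two_ne_zero ENNReal.ofNat_ne_top j).ne'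
          (ENNReal.zpow_ne_top two_ne_zero ENNReal.ofNat_ne_top j), ENNReal.rpow_one,
        div_eq_mul_inv, mul_assoc]
    · simp
  calc _ = (∑' j : ℤ, if 2 ^ j < b then ((2:ℝ≥0∞) ^ j) ^ (q - 1) else 0) * b := by
        rw [tsum_congr hterm, ENNReal.tsum_mul_right]
  _ ≤ (1 - 2 ^ (-(q - 1)))⁻¹ * b ^ (q - 1) * b := by
        gcongr
        exact tsum_ite_zpow_lt_le (by linarith)
  _ = _ := by
        rw [neg_sub, mul_assoc]
        congr 1
        calc b ^ (q - 1) * b = b ^ (q - 1) * b ^ (1:ℝ) := by rw [ENNReal.rpow_one]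
        _ = b ^ q := by
            rw [← ENNReal.rpow_add_of_nonneg _ _ (by linarith) zero_le_one, sub_add_cancel]

end DyadicLayerCake

section StrongType

variable {n : ℕ} {μ : Measure (Rn n)}

-- `4 ^ q` comes from `rpow_le_four_rpow_mul_tsum`, the other factor from a geometric series.
def dyadicMaxConst (q : ℝ) : ℝ≥0∞ := 4 ^ q * (1 - 2 ^ (1 - q))⁻¹

lemma dyadicMaxConst_ne_zero (q : ℝ) : dyadicMaxConst q ≠ 0 :=
  mul_ne_zero (by positivity)
    (ENNReal.inv_ne_zero.mpr (ne_top_of_le_ne_top ENNReal.one_ne_top tsub_le_self))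

lemma dyadicMaxConst_ne_top {q : ℝ} (hq : 1 < q) : dyadicMaxConst q ≠ ∞ := by
  have hlt : (2:ℝ≥0∞) ^ (1 - q) < 1 :=
    ENNReal.rpow_lt_one_of_one_lt_of_neg one_lt_two (by linarith)
  exact ENNReal.mul_ne_top (ENNReal.rpow_ne_top_of_nonneg (by linarith) ENNReal.ofNat_ne_top)
    (ENNReal.inv_ne_top.mpr (tsub_pos_of_lt hlt).ne')

theorem lintegral_dyadicMax_rpow_le {g : Rn n → ℝ≥0∞} (hg : Measurable g) {q : ℝ} (hq : 1 < q) :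
    ∫⁻ x, dyadicMax μ g x ^ q ∂μ ≤ dyadicMaxConst q * ∫⁻ x, g x ^ q ∂μ := by
  have hq0 : 0 < q := by linarith
  have h2 : (2:ℝ≥0∞) ≠ 0 := two_ne_zero
  have h2' : (2:ℝ≥0∞) ≠ ∞ := ENNReal.ofNat_ne_top
  have hM := measurable_dyadicMax μ g
  have hlevel : ∀ j : ℤ, ∫⁻ x, (if 2 * 2 ^ j < dyadicMax μ g x then ((2:ℝ≥0∞) ^ j) ^ q else 0) ∂μ
      = ((2:ℝ≥0∞) ^ j) ^ q * μ {x | 2 * 2 ^ j < dyadicMax μ g x} := by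
    intro j
    rw [← lintegral_indicator_const (measurableSet_lt measurable_const hM)]
    refine lintegral_congr fun x => ?_
    by_cases hx : 2 * 2 ^ j < dyadicMax μ g x <;> simp [hx]
  have hind : ∀ j : ℤ, Measurable ({y | (2:ℝ≥0∞) ^ j < g y}.indicator g) :=
    fun j => hg.indicator (measurableSet_lt measurable_const hg)
  calc ∫⁻ x, dyadicMax μ g x ^ q ∂μ
      ≤ ∫⁻ x, 4 ^ q * ∑' j : ℤ,
          (if 2 * 2 ^ j < dyadicMax μ g x then ((2:ℝ≥0∞) ^ j) ^ q else 0) ∂μ :=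
        lintegral_mono fun x => rpow_le_four_rpow_mul_tsum hq0
  _ = 4 ^ q * ∑' j : ℤ, ((2:ℝ≥0∞) ^ j) ^ q * μ {x | 2 * 2 ^ j < dyadicMax μ g x} := by
        rw [lintegral_const_mul' _ _ (ENNReal.rpow_ne_top_of_nonneg hq0.le ENNReal.ofNat_ne_top),
          lintegral_tsum fun j => (Measurable.ite (measurableSet_lt measurable_const hM)
            measurable_const measurable_const).aemeasurable]
        simp_rw [hlevel]
  _ ≤ 4 ^ q * ∑' j : ℤ, ((2:ℝ≥0∞) ^ j) ^ q *
        ((2 ^ j)⁻¹ * ∫⁻ y, {y | 2 ^ j < g y}.indicator g y ∂μ) := by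
        gcongr with j
        exact measure_two_mul_lt_dyadicMax_le g (ENNReal.zpow_pos h2 h2' j).ne'
          (ENNReal.zpow_ne_top h2 h2' j)
  _ = 4 ^ q * ∫⁻ y, ∑' j : ℤ, ((2:ℝ≥0∞) ^ j) ^ q *
        ((2 ^ j)⁻¹ * {y | 2 ^ j < g y}.indicator g y) ∂μ := by
        rw [lintegral_tsum fun j => (((hind j).const_mul _).const_mul _).aemeasurable]
        congr 1
        refine tsum_congr fun j => ?_
        rw [lintegral_const_mul _ ((hind j).const_mul _), lintegral_const_mul _ (hind j)]
  _ ≤ 4 ^ q * ∫⁻ y, (1 - 2 ^ (1 - q))⁻¹ * g y ^ q ∂μ := by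
        gcongr with y
        simpa only [Set.indicator_apply, Set.mem_ofPred_eq] using
          tsum_zpow_rpow_mul_ite_le (b := g y) hq
  _ = dyadicMaxConst q * ∫⁻ x, g x ^ q ∂μ := by
        rw [lintegral_const_mul _ (hg.pow_const q), dyadicMaxConst, mul_assoc]

end StrongType

section WeightedAverages

variable {n : ℕ} {σ : Rn n → ℝ≥0∞}

lemma dAvgW_eq_setLAverage (hσ : Measurable σ) {f : Rn n → ℝ≥0∞} (hf : Measurable f)
    {Q : Set (Rn n)} (hQ : MeasurableSet Q) :
    dAvgW σ f Q = ⨍⁻ x in Q, f x ∂(volume.withDensity σ) := by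
  rw [dAvgW, setLAverage_eq, withDensity_apply _ hQ,
    setLIntegral_withDensity_eq_setLIntegral_mul _ hσ hf hQ, div_eq_mul_inv, mul_comm]
  simp only [Pi.mul_apply, mul_comm (σ _)]

lemma setLIntegral_mul_eq_zero (hσ : Measurable σ) (f : Rn n → ℝ≥0∞) {Q : Set (Rn n)}
    (h0 : ∫⁻ x in Q, σ x = 0) : ∫⁻ x in Q, f x * σ x = 0 := by
  have hae : σ =ᵐ[volume.restrict Q] 0 := (lintegral_eq_zero_iff hσ).mp h0
  have hae' : (fun x => f x * σ x) =ᵐ[volume.restrict Q] 0 :=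
    hae.mono fun x hx => by simp [show σ x = 0 from hx]
  rw [lintegral_congr_ae hae']
  simp

lemma dAvg_mul_eq (hσ : Measurable σ) (f : Rn n → ℝ≥0∞) {Q : Set (Rn n)}
    (hQσ : ∫⁻ x in Q, σ x ≠ ∞) :
    dAvg (fun x => f x * σ x) Q = dAvg σ Q * dAvgW σ f Q := by
  rcases eq_or_ne (∫⁻ x in Q, σ x) 0 with h0 | h0
  · simp [dAvg, dAvgW, setLIntegral_mul_eq_zero hσ f h0, h0]
  · rw [dAvg, dAvg, dAvgW, mul_assoc, ← mul_assoc (∫⁻ x in Q, σ x),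
      ENNReal.mul_inv_cancel h0 hQσ, one_mul]

lemma rpow_dAvgW_le_dAvgW_dyadicMax_rpow (hσ : Measurable σ) {f : Rn n → ℝ≥0∞}
    (hf : Measurable f) {s : ℝ} (hs : 0 < s) {Q : Set (Rn n)} (hQ : IsDyadicCube n Q)
    (hQσ : ∫⁻ x in Q, σ x ≠ ∞) :
    dAvgW σ f Q ^ s ≤ dAvgW σ (fun y => dyadicMax (volume.withDensity σ) f y ^ s) Q := by
  obtain ⟨k, m, rfl⟩ := isDyadicCube_iff.mp hQ
  have hQm := measurableSet_dyadicCube (n := n) k m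
  rw [dAvgW_eq_setLAverage hσ hf hQm,
    dAvgW_eq_setLAverage hσ ((measurable_dyadicMax _ f).pow_const s) hQm]
  rcases eq_or_ne (volume.withDensity σ (dyadicCube n k m)) 0 with h0 | h0
  · simp [setLAverage_eq, setLIntegral_measure_zero _ _ h0, ENNReal.zero_rpow_of_pos hs]
  · refine le_setLAverage_of_forall_le hQm h0 (by rwa [withDensity_apply _ hQm]) fun y hy => ?_
    exact ENNReal.rpow_le_rpow (setLAverage_le_dyadicMax hy) hs.le

end WeightedAverages

section LpNorm

variable {n : ℕ}

lemma lpNorm_rpow {p r : ℝ} (hp : 0 < p) (hr : 0 < r) (w g : Rn n → ℝ≥0∞) :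
    lpNorm p w g ^ r = lpNorm (p / r) w (fun x => g x ^ r) := by
  rw [lpNorm, lpNorm, ← ENNReal.rpow_mul, show 1 / p * r = 1 / (p / r) by field_simp]
  congr 1
  refine lintegral_congr fun x => ?_
  rw [← ENNReal.rpow_mul, show r * (p / r) = p by field_simp]

lemma lpNorm_mono {p : ℝ} (hp : 0 < p) (w : Rn n → ℝ≥0∞) {F G : Rn n → ℝ≥0∞}
    (h : ∀ x, F x ≤ G x) : lpNorm p w F ≤ lpNorm p w G := by
  unfold lpNorm
  gcongr with x
  exact h x

lemma lpNorm_const_mul {p : ℝ} (hp : 0 < p) {c : ℝ≥0∞} (hc : c ≠ ∞) (w F : Rn n → ℝ≥0∞) :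
    lpNorm p w (fun x => c * F x) = c * lpNorm p w F := by
  have h : ∀ x, (c * F x) ^ p * w x = c ^ p * (F x ^ p * w x) := fun x => by
    rw [ENNReal.mul_rpow_of_nonneg _ _ hp.le, mul_assoc]
  rw [lpNorm, lintegral_congr h, lintegral_const_mul' _ _ (ENNReal.rpow_ne_top_of_nonneg hp.le hc),
    ENNReal.mul_rpow_of_nonneg _ _ (by positivity), ← ENNReal.rpow_mul, mul_one_div_cancel hp.ne',
    ENNReal.rpow_one, lpNorm]

lemma lpNorm_eq_withDensity {p : ℝ} {σ f : Rn n → ℝ≥0∞} (hσ : Measurable σ) (hf : Measurable f) :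
    lpNorm p σ f = (∫⁻ x, f x ^ p ∂(volume.withDensity σ)) ^ (1 / p) := by
  rw [lpNorm, lintegral_withDensity_eq_lintegral_mul _ hσ (hf.pow_const p)]
  simp only [Pi.mul_apply, mul_comm (σ _)]

lemma lpNorm_dyadicMax_le {q : ℝ} (hq : 1 < q) {σ f : Rn n → ℝ≥0∞} (hσ : Measurable σ)
    (hf : Measurable f) :
    lpNorm q σ (dyadicMax (volume.withDensity σ) f)
      ≤ dyadicMaxConst q ^ (1 / q) * lpNorm q σ f := by
  rw [lpNorm_eq_withDensity hσ (measurable_dyadicMax _ f), lpNorm_eq_withDensity hσ hf,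
    ← ENNReal.mul_rpow_of_nonneg _ _ (by positivity)]
  gcongr
  exact lintegral_dyadicMax_rpow_le hf hq

end LpNorm

section SparseOperators

variable {n : ℕ} (S : Set (Set (Rn n))) (r : ℝ)

def sparseWeightedOp (σ f : Rn n → ℝ≥0∞) (x : Rn n) : ℝ≥0∞ :=
  ∑' Q : S, (Q : Set (Rn n)).indicator (fun _ => dAvg σ Q ^ r * dAvgW σ (fun y => f y ^ r) Q) x

def sparseWeightedSup (p : ℝ) (w σ : Rn n → ℝ≥0∞) : ℝ≥0∞ :=
  ⨆ (f : Rn n → ℝ≥0∞) (_ : Measurable f ∧ lpNorm p σ f = 1),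
    lpNorm (p / r) w (sparseWeightedOp S r σ f)

variable {S r} {σ : Rn n → ℝ≥0∞}

lemma sparseOp_rpow (hr : 0 < r) (g : Rn n → ℝ≥0∞) (x : Rn n) :
    sparseOp S r g x ^ r = ∑' Q : S, (Q : Set (Rn n)).indicator (fun _ => dAvg g Q ^ r) x := by
  rw [sparseOp, ← ENNReal.rpow_mul, one_div_mul_cancel hr.ne', ENNReal.rpow_one]

lemma sparseOp_rpow_le_sparseWeightedOp_dyadicMax (hS : ∀ Q ∈ S, IsDyadicCube n Q)
    (hσ : Measurable σ) (hσloc : LocInt σ) (hr : 0 < r) {f : Rn n → ℝ≥0∞} (hf : Measurable f)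
    (x : Rn n) :
    sparseOp S r (fun y => f y * σ y) x ^ r
      ≤ sparseWeightedOp S r σ (dyadicMax (volume.withDensity σ) f) x := by
  rw [sparseOp_rpow hr]
  refine ENNReal.tsum_le_tsum fun Q => Set.indicator_le_indicator ?_
  have hQσ := (hσloc Q (hS Q Q.2)).ne
  rw [dAvg_mul_eq hσ f hQσ, ENNReal.mul_rpow_of_nonneg _ _ hr.le]
  gcongr
  exact rpow_dAvgW_le_dAvgW_dyadicMax_rpow hσ hf hr (hS Q Q.2) hQσ

lemma sparseWeightedOp_le_sparseOp_rpow (hS : ∀ Q ∈ S, IsDyadicCube n Q)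
    (hσ : Measurable σ) (hσloc : LocInt σ) (hr : 0 < r) {f : Rn n → ℝ≥0∞} (hf : Measurable f)
    (x : Rn n) :
    sparseWeightedOp S r σ f x ≤ sparseOp S r
      (fun y => dyadicMax (volume.withDensity σ) (fun z => f z ^ r) y ^ (1 / r) * σ y) x ^ r := by
  rw [sparseOp_rpow hr]
  refine ENNReal.tsum_le_tsum fun Q => Set.indicator_le_indicator ?_
  have hQσ := (hσloc Q (hS Q Q.2)).ne
  rw [dAvg_mul_eq hσ _ hQσ, ENNReal.mul_rpow_of_nonneg _ _ hr.le]
  gcongr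
  calc dAvgW σ (fun y => f y ^ r) Q = (dAvgW σ (fun y => f y ^ r) Q ^ (1 / r)) ^ r := by
        rw [← ENNReal.rpow_mul, one_div_mul_cancel hr.ne', ENNReal.rpow_one]
  _ ≤ _ := by
        gcongr
        exact rpow_dAvgW_le_dAvgW_dyadicMax_rpow hσ (hf.pow_const r) (one_div_pos.mpr hr)
          (hS Q Q.2) hQσ

lemma sparseWeightedOp_const_mul (hr : 0 < r) {c : ℝ≥0∞} (hc : c ≠ ∞) (f : Rn n → ℝ≥0∞) :
    sparseWeightedOp S r σ (fun y => c * f y) = fun x => c ^ r * sparseWeightedOp S r σ f x := by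
  have hterm : ∀ Q, dAvgW σ (fun y => (c * f y) ^ r) Q = c ^ r * dAvgW σ (fun y => f y ^ r) Q := by
    intro Q
    simp only [dAvgW, ENNReal.mul_rpow_of_nonneg _ _ hr.le, mul_assoc]
    rw [lintegral_const_mul' _ _ (ENNReal.rpow_ne_top_of_nonneg hr.le hc), mul_left_comm]
  ext x
  simp only [sparseWeightedOp, hterm, ← ENNReal.tsum_mul_left]
  refine tsum_congr fun Q => ?_
  by_cases hx : x ∈ (Q : Set (Rn n)) <;> simp [hx, mul_left_comm]

lemma sparseWeightedOp_eq_zero {p : ℝ} (hp : 0 < p) (hr : 0 < r) (hσ : Measurable σ)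
    {f : Rn n → ℝ≥0∞} (hf : Measurable f) (h0 : lpNorm p σ f = 0) :
    sparseWeightedOp S r σ f = 0 := by
  have hint : ∫⁻ x, f x ^ p * σ x = 0 := by
    rw [lpNorm, ENNReal.rpow_eq_zero_iff] at h0
    rcases h0 with ⟨h, -⟩ | ⟨-, h⟩
    · exact h
    · exact absurd h (not_lt.mpr (by positivity))
  have hae : ∀ᵐ x, f x ^ r * σ x = 0 := by
    filter_upwards [(lintegral_eq_zero_iff ((hf.pow_const p).mul hσ)).mp hint] with x hx
    rcases mul_eq_zero.mp hx with h | h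
    · simp [(ENNReal.rpow_eq_zero_iff_of_pos hp).mp h, ENNReal.zero_rpow_of_pos hr]
    · simp [h]
  ext x
  refine ENNReal.tsum_eq_zero.mpr fun Q => ?_
  have hQ : ∫⁻ y in Q, f y ^ r * σ y = 0 := by
    rw [lintegral_congr_ae (ae_restrict_of_ae hae)]
    simp
  simp [dAvgW, hQ]

lemma lpNorm_sparseWeightedOp_le {p : ℝ} (hp : 0 < p) (hr : 0 < r) (hσ : Measurable σ)
    (w : Rn n → ℝ≥0∞) {f : Rn n → ℝ≥0∞} (hf : Measurable f) (hfin : lpNorm p σ f ≠ ∞) :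
    lpNorm (p / r) w (sparseWeightedOp S r σ f)
      ≤ lpNorm p σ f ^ r * sparseWeightedSup S r p w σ := by
  rcases eq_or_ne (lpNorm p σ f) 0 with h0 | h0
  · rw [sparseWeightedOp_eq_zero hp hr hσ hf h0]
    simp [lpNorm, ENNReal.zero_rpow_of_pos (div_pos hp hr),
      ENNReal.zero_rpow_of_pos (div_pos hr hp)]
  set u : Rn n → ℝ≥0∞ := fun y => (lpNorm p σ f)⁻¹ * f y
  have hu : lpNorm p σ u = 1 := by
    rw [lpNorm_const_mul hp (ENNReal.inv_ne_top.mpr h0), ENNReal.inv_mul_cancel h0 hfin]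
  have hfu : f = fun y => lpNorm p σ f * u y := by
    ext y
    rw [← mul_assoc, ENNReal.mul_inv_cancel h0 hfin, one_mul]
  conv_lhs => rw [hfu]
  rw [sparseWeightedOp_const_mul hr hfin, lpNorm_const_mul (div_pos hp hr)
    (ENNReal.rpow_ne_top_of_nonneg hr.le hfin)]
  gcongr
  exact le_iSup₂ (f := fun (g : Rn n → ℝ≥0∞) (_ : Measurable g ∧ lpNorm p σ g = 1) =>
    lpNorm (p / r) w (sparseWeightedOp S r σ g)) u ⟨hf.const_mul _, hu⟩

end SparseOperators

section MainBounds

variable {n : ℕ} {S : Set (Set (Rn n))} {r p : ℝ} {w σ : Rn n → ℝ≥0∞}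

-- A function of infinite norm imposes no condition on the constant `B + ε`, `ε > 0`.
lemma opNormStrong_le_of_forall_lpNorm_ne_top {B : ℝ≥0∞}
    (h : ∀ f : Rn n → ℝ≥0∞, Measurable f → lpNorm p σ f ≠ ∞ →
      lpNorm p w (sparseOp S r (fun x => f x * σ x)) ≤ B * lpNorm p σ f) :
    opNormStrong S r p w σ ≤ B := by
  refine ENNReal.le_of_forall_pos_le_add fun ε hε _ => sInf_le fun f hf => ?_
  rcases eq_or_ne (lpNorm p σ f) ∞ with htop | hfin
  · rw [htop, ENNReal.mul_top (by positivity)]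
    exact le_top
  · exact (h f hf hfin).trans (by gcongr; exact le_self_add)

lemma lpNorm_dyadicMax_rpow_le (hσ : Measurable σ) {f : Rn n → ℝ≥0∞} (hf : Measurable f)
    (hr : 0 < r) (hrp : r < p) :
    lpNorm p σ (fun y => dyadicMax (volume.withDensity σ) (fun z => f z ^ r) y ^ (1 / r))
      ≤ dyadicMaxConst (p / r) ^ (1 / p) * lpNorm p σ f := by
  have hp : 0 < p := hr.trans hrp
  rw [← ENNReal.rpow_le_rpow_iff hr, lpNorm_rpow hp hr, ENNReal.mul_rpow_of_nonneg _ _ hr.le,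
    lpNorm_rpow hp hr, ← ENNReal.rpow_mul, show 1 / p * r = 1 / (p / r) by field_simp]
  simp_rw [← ENNReal.rpow_mul, one_div_mul_cancel hr.ne', ENNReal.rpow_one]
  exact lpNorm_dyadicMax_le ((one_lt_div hr).mpr hrp) hσ (hf.pow_const r)

theorem inv_mul_sparseWeightedSup_le_opNormStrong_rpow (hS : ∀ Q ∈ S, IsDyadicCube n Q)
    (hσ : Measurable σ) (hσloc : LocInt σ) (hr : 0 < r) (hrp : r < p) :
    (dyadicMaxConst (p / r) ^ (r / p))⁻¹ * sparseWeightedSup S r p w σ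
      ≤ opNormStrong S r p w σ ^ r := by
  have hp : 0 < p := hr.trans hrp
  have hK := dyadicMaxConst_ne_top ((one_lt_div hr).mpr hrp)
  have hK0 : dyadicMaxConst (p / r) ^ (r / p) ≠ 0 :=
    (ENNReal.rpow_pos (pos_iff_ne_zero.mpr (dyadicMaxConst_ne_zero _)) hK).ne'
  have hKtop : dyadicMaxConst (p / r) ^ (r / p) ≠ ∞ :=
    ENNReal.rpow_ne_top_of_nonneg (div_pos hr hp).le hK
  rw [← ENNReal.rpow_inv_le_iff hr]
  refine le_sInf fun C hC => ?_
  rw [ENNReal.rpow_inv_le_iff hr, ENNReal.inv_mul_le_iff hK0 hKtop]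
  refine iSup₂_le fun f ⟨hf, hf1⟩ => ?_
  calc lpNorm (p / r) w (sparseWeightedOp S r σ f)
      ≤ lpNorm (p / r) w (fun x => sparseOp S r (fun y =>
          dyadicMax (volume.withDensity σ) (fun z => f z ^ r) y ^ (1 / r) * σ y) x ^ r) :=
        lpNorm_mono (div_pos hp hr) w (sparseWeightedOp_le_sparseOp_rpow hS hσ hσloc hr hf)
  _ = lpNorm p w (sparseOp S r (fun y =>
          dyadicMax (volume.withDensity σ) (fun z => f z ^ r) y ^ (1 / r) * σ y)) ^ r :=
        (lpNorm_rpow hp hr _ _).symm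
  _ ≤ (C * (dyadicMaxConst (p / r) ^ (1 / p) * lpNorm p σ f)) ^ r := by
        gcongr
        refine (hC _ ((measurable_dyadicMax _ _).pow_const _)).trans ?_
        gcongr
        exact lpNorm_dyadicMax_rpow_le hσ hf hr hrp
  _ = dyadicMaxConst (p / r) ^ (r / p) * C ^ r := by
        rw [hf1, mul_one, ENNReal.mul_rpow_of_nonneg _ _ hr.le, ← ENNReal.rpow_mul,
          one_div_mul_eq_div, mul_comm]

theorem opNormStrong_rpow_le (hS : ∀ Q ∈ S, IsDyadicCube n Q) (hσ : Measurable σ)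
    (hσloc : LocInt σ) (hp : 1 < p) (hr : 0 < r) :
    opNormStrong S r p w σ ^ r ≤ dyadicMaxConst p ^ (r / p) * sparseWeightedSup S r p w σ := by
  have hp0 : 0 < p := zero_lt_one.trans hp
  rw [← ENNReal.le_rpow_inv_iff hr]
  refine opNormStrong_le_of_forall_lpNorm_ne_top fun f hf hfin => ?_
  rw [← ENNReal.rpow_le_rpow_iff hr]
  have hM := lpNorm_dyadicMax_le hp hσ hf
  have hMfin : lpNorm p σ (dyadicMax (volume.withDensity σ) f) ≠ ∞ :=
    ne_top_of_le_ne_top (ENNReal.mul_ne_top (ENNReal.rpow_ne_top_of_nonneg (by positivity)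
      (dyadicMaxConst_ne_top hp)) hfin) hM
  calc lpNorm p w (sparseOp S r (fun x => f x * σ x)) ^ r
      = lpNorm (p / r) w (fun x => sparseOp S r (fun y => f y * σ y) x ^ r) :=
        lpNorm_rpow hp0 hr _ _
  _ ≤ lpNorm (p / r) w (sparseWeightedOp S r σ (dyadicMax (volume.withDensity σ) f)) :=
        lpNorm_mono (div_pos hp0 hr) w
          (sparseOp_rpow_le_sparseWeightedOp_dyadicMax hS hσ hσloc hr hf)
  _ ≤ lpNorm p σ (dyadicMax (volume.withDensity σ) f) ^ r * sparseWeightedSup S r p w σ :=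
        lpNorm_sparseWeightedOp_le hp0 hr hσ w (measurable_dyadicMax _ f) hMfin
  _ ≤ (dyadicMaxConst p ^ (1 / p) * lpNorm p σ f) ^ r * sparseWeightedSup S r p w σ := by
        gcongr
  _ = ((dyadicMaxConst p ^ (r / p) * sparseWeightedSup S r p w σ) ^ r⁻¹ * lpNorm p σ f) ^ r := by
        rw [ENNReal.mul_rpow_of_nonneg _ _ hr.le, ENNReal.mul_rpow_of_nonneg _ _ hr.le,
          ← ENNReal.rpow_mul, ← ENNReal.rpow_mul, inv_mul_cancel₀ hr.ne', ENNReal.rpow_one,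
          one_div_mul_eq_div]
        ring

end MainBounds

/-- Lemma 2.1, strong type (`0 < r < p`, `p > 1`):
`‖A_𝒮^r(·σ)‖_{L^p(σ)→L^p(w)}^r ≃ sup_{‖f‖_{L^p(σ)}=1} ‖∑_Q ⟨σ⟩_Q^r ⟨f^r⟩_Q^σ 1_Q‖_{L^{p/r}(w)}`. -/
theorem statement7 (n : ℕ) (p r : ℝ) (hp : 1 < p) (hr : 0 < r) (hrp : r < p) :
    ∃ c C : ℝ≥0∞, 0 < c ∧ C ≠ ∞ ∧
      ∀ S : Set (Set (Rn n)), IsSparse n S →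
      ∀ w σ : Rn n → ℝ≥0∞, Measurable w → Measurable σ → LocInt w → LocInt σ →
        c * (⨆ (f : Rn n → ℝ≥0∞) (_ : Measurable f ∧ lpNorm p σ f = 1),
              lpNorm (p / r) w (fun x => ∑' Q : S, (Q : Set (Rn n)).indicator
                (fun _ => (dAvg σ Q) ^ r * dAvgW σ (fun y => (f y) ^ r) Q) x))
            ≤ (opNormStrong S r p w σ) ^ r ∧
        (opNormStrong S r p w σ) ^ r ≤
          C * (⨆ (f : Rn n → ℝ≥0∞) (_ : Measurable f ∧ lpNorm p σ f = 1),
              lpNorm (p / r) w (fun x => ∑' Q : S, (Q : Set (Rn n)).indicator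
                (fun _ => (dAvg σ Q) ^ r * dAvgW σ (fun y => (f y) ^ r) Q) x)) := by
  have hrp' : 0 ≤ r / p := div_nonneg hr.le (hr.trans hrp).le
  refine ⟨(dyadicMaxConst (p / r) ^ (r / p))⁻¹, dyadicMaxConst p ^ (r / p), ?_, ?_, ?_⟩
  · exact ENNReal.inv_pos.mpr
      (ENNReal.rpow_ne_top_of_nonneg hrp' (dyadicMaxConst_ne_top ((one_lt_div hr).mpr hrp)))
  · exact ENNReal.rpow_ne_top_of_nonneg hrp' (dyadicMaxConst_ne_top hp)
  intro S hS w σ _ hσ _ hσloc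
  exact ⟨inv_mul_sparseWeightedSup_le_opNormStrong_rpow hS.1 hσ hσloc hr hrp,
    opNormStrong_rpow_le hS.1 hσ hσloc hp hr⟩

end Paper
end
end

section
/- Let 1 < p < ∞ and let w, σ be weights on ℝ^n with [w,σ]_{A_p} < ∞. Then for every measurable f ≥ 0 and every t > 0: w({x ∈ ℝ^n : M(fσ)(x) > t}) ≤ C · [w,σ]_{A_p} · t^{−p} · ∫ f^p σ, where C depends only on n and p, and M is the dyadic maximal operator. -/
open MeasureTheory ENNReal NNReal Set

noncomputable section

namespace Paper

variable {n : ℕ}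

def dcube (n : ℕ) (k : ℤ) (m : Fin n → ℤ) : Set (Rn n) :=
  {x : Rn n | ∀ i, (2:ℝ) ^ (-k) * m i ≤ x i ∧ x i < (2:ℝ) ^ (-k) * (m i + 1)}

lemma isDyadicCube_dcube (k : ℤ) (m : Fin n → ℤ) : IsDyadicCube n (dcube n k m) := ⟨k, m, rfl⟩

lemma mem_dcube {k : ℤ} {m : Fin n → ℤ} {x : Rn n} :
    x ∈ dcube n k m ↔ ∀ i, ⌊(2:ℝ) ^ k * x i⌋ = m i := by
  have h2 : (0:ℝ) < (2:ℝ) ^ k := zpow_pos (by norm_num) _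
  refine forall_congr' fun i => ?_
  rw [zpow_neg, inv_mul_le_iff₀ h2, lt_inv_mul_iff₀ h2]
  exact (Int.floor_eq_iff).symm

def cubeOf (k : ℤ) (x : Rn n) : Set (Rn n) := dcube n k (fun i => ⌊(2:ℝ) ^ k * x i⌋)

lemma mem_cubeOf (k : ℤ) (x : Rn n) : x ∈ cubeOf k x := mem_dcube.2 fun _ => rfl

lemma eq_cubeOf_of_mem {k : ℤ} {m : Fin n → ℤ} {x : Rn n} (h : x ∈ dcube n k m) :
    dcube n k m = cubeOf k x := by
  have hm : m = fun i => ⌊(2:ℝ) ^ k * x i⌋ := funext fun i => ((mem_dcube.1 h) i).symm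
  rw [cubeOf, ← hm]

lemma floor_div_int' (a : ℝ) {d : ℤ} (hd : 0 < d) : ⌊a / (d:ℝ)⌋ = ⌊a⌋ / d := by
  have hd' : (0:ℝ) < (d:ℝ) := by exact_mod_cast hd
  have hmod := Int.mul_ediv_add_emod ⌊a⌋ d
  have hmn := Int.emod_nonneg ⌊a⌋ (ne_of_gt hd)
  have hml := Int.emod_lt_of_pos ⌊a⌋ hd
  have h5 : ⌊a⌋ / d * d ≤ ⌊a⌋ := by nlinarith [mul_comm (⌊a⌋ / d) d]
  have h6 : ⌊a⌋ + 1 ≤ (⌊a⌋ / d + 1) * d := by nlinarith [mul_comm (⌊a⌋ / d) d]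
  rw [Int.floor_eq_iff]
  constructor
  · rw [le_div_iff₀ hd']
    calc ((⌊a⌋ / d : ℤ):ℝ) * d = ((⌊a⌋ / d * d : ℤ) : ℝ) := by push_cast; ring
      _ ≤ (⌊a⌋ : ℝ) := by exact_mod_cast h5
      _ ≤ a := Int.floor_le a
  · rw [div_lt_iff₀ hd']
    calc a < (⌊a⌋ : ℝ) + 1 := Int.lt_floor_add_one a
      _ ≤ ((⌊a⌋ / d + 1) * d : ℤ) := by exact_mod_cast h6
      _ = ((⌊a⌋ / d : ℤ) + 1) * d := by push_cast; ring

lemma floor_zpow_le {k k' : ℤ} (h : k ≤ k') {a b : ℝ}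
    (hab : ⌊(2:ℝ) ^ k' * a⌋ = ⌊(2:ℝ) ^ k' * b⌋) : ⌊(2:ℝ) ^ k * a⌋ = ⌊(2:ℝ) ^ k * b⌋ := by
  obtain ⟨d, hd⟩ : ∃ d : ℕ, k' = k + d := ⟨(k' - k).toNat, by omega⟩
  have h2d : (0:ℤ) < 2 ^ d := by positivity
  have key : ∀ z : ℝ, (2:ℝ) ^ k * z = ((2:ℝ) ^ k' * z) / (((2:ℤ) ^ d : ℤ) : ℝ) := by
    intro z
    have h1 : (2:ℝ) ^ k' = (2:ℝ) ^ k * (2:ℝ) ^ (d:ℤ) := by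
      rw [hd, zpow_add₀ (two_ne_zero)]
    have h2 : (((2:ℤ) ^ d : ℤ) : ℝ) = (2:ℝ) ^ (d:ℤ) := by
      push_cast [zpow_natCast]; ring
    have h3 : (0:ℝ) < (2:ℝ) ^ (d:ℤ) := zpow_pos (by norm_num) _
    rw [h1, h2]
    field_simp
  rw [key a, key b, floor_div_int' _ h2d, floor_div_int' _ h2d, hab]

lemma dcube_subset {k k' : ℤ} (h : k ≤ k') {m m' : Fin n → ℤ} {x : Rn n}
    (hx : x ∈ dcube n k m) (hx' : x ∈ dcube n k' m') : dcube n k' m' ⊆ dcube n k m := by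
  intro y hy
  rw [mem_dcube] at hx hx' hy ⊢
  intro i
  have : ⌊(2:ℝ) ^ k * y i⌋ = ⌊(2:ℝ) ^ k * x i⌋ :=
    floor_zpow_le h (by rw [hy i, hx' i])
  rw [this, hx i]

lemma dcube_eq_pi (k : ℤ) (m : Fin n → ℤ) : dcube n k m =
    Set.pi Set.univ (fun i => Set.Ico ((2:ℝ) ^ (-k) * m i) ((2:ℝ) ^ (-k) * (m i + 1))) := by
  ext x; simp [dcube, Set.mem_pi, Set.mem_Ico]

lemma measurableSet_dcube (k : ℤ) (m : Fin n → ℤ) : MeasurableSet (dcube n k m) := by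
  rw [dcube_eq_pi]; exact MeasurableSet.univ_pi fun _ => measurableSet_Ico

lemma volume_dcube (k : ℤ) (m : Fin n → ℤ) :
    volume (dcube n k m) = ENNReal.ofReal ((2:ℝ) ^ (-k)) ^ n := by
  rw [dcube_eq_pi, volume_pi_pi]
  have : ∀ i : Fin n, volume (Set.Ico ((2:ℝ) ^ (-k) * m i) ((2:ℝ) ^ (-k) * (m i + 1)))
      = ENNReal.ofReal ((2:ℝ) ^ (-k)) := by
    intro i; rw [Real.volume_Ico]; congr 1; ring
  rw [Finset.prod_congr rfl fun i _ => this i, Finset.prod_const, Finset.card_univ,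
    Fintype.card_fin]

lemma volume_dcube_ne_zero (k : ℤ) (m : Fin n → ℤ) : volume (dcube n k m) ≠ 0 := by
  rw [volume_dcube]
  have h : (0:ℝ) < (2:ℝ) ^ (-k) := zpow_pos (by norm_num) _
  have h2 : (0:ℝ) < (2:ℝ) ^ k := zpow_pos (by norm_num) _
  exact pow_ne_zero _ (by simp [ENNReal.ofReal_eq_zero, not_le, h, h2])

lemma volume_dcube_ne_top (k : ℤ) (m : Fin n → ℤ) : volume (dcube n k m) ≠ ∞ := by
  rw [volume_dcube]
  exact ENNReal.pow_ne_top ENNReal.ofReal_ne_top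


lemma holder_on_cube {σ f : Rn n → ℝ≥0∞} (hσ : Measurable σ) (hf : Measurable f)
    {p q : ℝ} (hpq : p.HolderConjugate q) (Q : Set (Rn n)) :
    ∫⁻ x in Q, f x * σ x ≤
      (∫⁻ x in Q, f x ^ p * σ x) ^ (1/p) * (∫⁻ x in Q, σ x) ^ (1/q) := by
  set ν := (volume.restrict Q).withDensity σ with hν
  have hmul : ∀ g : Rn n → ℝ≥0∞, Measurable g → ∫⁻ x, g x ∂ν = ∫⁻ x in Q, g x * σ x := by
    intro g hg
    rw [hν, lintegral_withDensity_eq_lintegral_mul _ hσ hg]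
    exact lintegral_congr fun x => mul_comm _ _
  have h1 : ∫⁻ x, ((f * (fun _ => (1:ℝ≥0∞)) : Rn n → ℝ≥0∞)) x ∂ν ≤
      (∫⁻ x, f x ^ p ∂ν) ^ (1/p) * (∫⁻ x, ((fun _ => (1:ℝ≥0∞)) x) ^ q ∂ν) ^ (1/q) :=
    ENNReal.lintegral_mul_le_Lp_mul_Lq ν hpq hf.aemeasurable aemeasurable_const
  have h2 : ∫⁻ x, ((f * (fun _ => (1:ℝ≥0∞)) : Rn n → ℝ≥0∞)) x ∂ν = ∫⁻ x in Q, f x * σ x := by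
    rw [← hmul f hf]; exact lintegral_congr fun x => by simp
  have h3 : ∫⁻ x, f x ^ p ∂ν = ∫⁻ x in Q, f x ^ p * σ x :=
    hmul (fun x => f x ^ p) (hf.pow_const p)
  have h4 : ∫⁻ x, ((fun _ => (1:ℝ≥0∞)) x) ^ q ∂ν = ∫⁻ x in Q, σ x := by
    simp only [ENNReal.one_rpow]
    rw [lintegral_one, hν, withDensity_apply _ MeasurableSet.univ, Measure.restrict_univ]
  rw [h2, h3, h4] at h1
  exact h1

lemma percube {p : ℝ} (hp : 1 < p) {w σ f : Rn n → ℝ≥0∞}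
    (hσ : Measurable σ) (hf : Measurable f) (hw : LocInt w) (hσi : LocInt σ)
    {t : ℝ≥0∞} (ht : 0 < t) (ht' : t ≠ ∞) {k : ℤ} {m : Fin n → ℤ}
    (h : t < dAvg (fun y => f y * σ y) (dcube n k m)) :
    ∫⁻ x in dcube n k m, w x ≤
      ApChar p w σ * t ^ (-p) * ∫⁻ x in dcube n k m, f x ^ p * σ x := by
  have hp0 : 0 < p := lt_trans one_pos hp
  have hp1 : (0:ℝ) ≤ p - 1 := by linarith
  set Q := dcube n k m with hQ
  set V := volume Q with hV
  have hV0 : V ≠ 0 := volume_dcube_ne_zero k m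
  have hVt : V ≠ ∞ := volume_dcube_ne_top k m
  set W := ∫⁻ x in Q, w x with hW
  set S := ∫⁻ x in Q, σ x with hS
  set J := ∫⁻ x in Q, f x ^ p * σ x with hJ
  set I := ∫⁻ x in Q, f x * σ x with hI
  have hWt : W ≠ ∞ := (hw Q (isDyadicCube_dcube k m)).ne
  set q := p / (p - 1) with hq
  have hpq : p.HolderConjugate q := Real.HolderConjugate.conjExponent hp
  have h1 : t * V ≤ I := by
    calc t * V ≤ (V⁻¹ * I) * V := mul_le_mul_left h.le V
      _ = (V⁻¹ * V) * I := by ring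
      _ = I := by rw [ENNReal.inv_mul_cancel hV0 hVt, one_mul]
  have h2 : I ≤ J ^ (1/p) * S ^ (1/q) := holder_on_cube hσ hf hpq Q
  have h3 : t ^ p * V ^ p ≤ J * S ^ (p-1) := by
    calc t ^ p * V ^ p = (t * V) ^ p := (ENNReal.mul_rpow_of_nonneg _ _ hp0.le).symm
      _ ≤ (J ^ (1/p) * S ^ (1/q)) ^ p :=
          ENNReal.rpow_le_rpow (h1.trans h2) hp0.le
      _ = J * S ^ (p-1) := by
          rw [ENNReal.mul_rpow_of_nonneg _ _ hp0.le, ← ENNReal.rpow_mul, ← ENNReal.rpow_mul,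
            one_div, inv_mul_cancel₀ (ne_of_gt hp0), ENNReal.rpow_one]
          congr 1
          rw [hq]
          field_simp
  have hA : V⁻¹ * W * (V⁻¹ * S) ^ (p-1) ≤ ApChar p w σ := by
    have : dAvg w Q * (dAvg σ Q) ^ (p-1) ≤ ApChar p w σ :=
      le_iSup₂ (f := fun (R : Set (Rn n)) (_ : IsDyadicCube n R) =>
        dAvg w R * (dAvg σ R) ^ (p - 1)) Q (isDyadicCube_dcube k m)
    exact this
  have hVsplit : V ^ (p-1) * V = V ^ p := by
    calc V ^ (p-1) * V = V ^ (p-1) * V ^ (1:ℝ) := by rw [ENNReal.rpow_one]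
      _ = V ^ (p-1+1) := (ENNReal.rpow_add _ _ hV0 hVt).symm
      _ = V ^ p := by norm_num
  have hc1 : V⁻¹ * V = 1 := ENNReal.inv_mul_cancel hV0 hVt
  have hc2 : (V ^ (p-1))⁻¹ * V ^ (p-1) = 1 :=
    ENNReal.inv_mul_cancel (ENNReal.rpow_pos (pos_iff_ne_zero.mpr hV0) hVt).ne'
      (ENNReal.rpow_ne_top_of_nonneg hp1 hVt)
  have key : W * S ^ (p-1) ≤ ApChar p w σ * V ^ p := by
    calc W * S ^ (p-1)
        = (V⁻¹ * W * ((V ^ (p-1))⁻¹ * S ^ (p-1))) * (V ^ (p-1) * V) := by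
          rw [show (V⁻¹ * W * ((V ^ (p-1))⁻¹ * S ^ (p-1))) * (V ^ (p-1) * V)
              = ((V⁻¹ * V) * ((V ^ (p-1))⁻¹ * (V ^ (p-1)))) * (W * S ^ (p-1)) from by ring,
            hc1, hc2, one_mul, one_mul]
      _ = (V⁻¹ * W * (V⁻¹ * S) ^ (p-1)) * V ^ p := by
          rw [ENNReal.mul_rpow_of_nonneg _ _ hp1, ENNReal.inv_rpow, hVsplit]
      _ ≤ ApChar p w σ * V ^ p := mul_le_mul_left hA _
  have hVp0 : V ^ p ≠ 0 := (ENNReal.rpow_pos (pos_iff_ne_zero.mpr hV0) hVt).ne'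
  have hVpt : V ^ p ≠ ∞ := ENNReal.rpow_ne_top_of_nonneg hp0.le hVt
  have key2 : W * t ^ p ≤ ApChar p w σ * J := by
    have hh : (W * t ^ p) * V ^ p ≤ (ApChar p w σ * J) * V ^ p := by
      calc (W * t ^ p) * V ^ p = W * (t ^ p * V ^ p) := by ring
        _ ≤ W * (J * S ^ (p-1)) := mul_le_mul_right h3 W
        _ = (W * S ^ (p-1)) * J := by ring
        _ ≤ (ApChar p w σ * V ^ p) * J := mul_le_mul_left key J
        _ = (ApChar p w σ * J) * V ^ p := by ring
    exact (ENNReal.mul_le_mul_iff_left hVp0 hVpt).mp hh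
  have htp0 : t ^ p ≠ 0 := (ENNReal.rpow_pos ht ht').ne'
  have htpt : t ^ p ≠ ∞ := ENNReal.rpow_ne_top_of_nonneg hp0.le ht'
  calc W = W * t ^ p * (t ^ p)⁻¹ := by
        rw [mul_assoc, ENNReal.mul_inv_cancel htp0 htpt, mul_one]
    _ ≤ ApChar p w σ * J * (t ^ p)⁻¹ := mul_le_mul_left key2 _
    _ = ApChar p w σ * t ^ (-p) * J := by rw [ENNReal.rpow_neg]; ring


/-- Section 4: two-weight weak `(p,p)` bound for the dyadic maximal operator:
`w({M(fσ) > t}) ≤ C [w,σ]_{A_p} t^{-p} ∫ f^p σ`. -/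
theorem statement15 (n : ℕ) (p : ℝ) (hp : 1 < p) :
    ∃ C : ℝ≥0∞, C ≠ ∞ ∧
      ∀ w σ : Rn n → ℝ≥0∞, Measurable w → Measurable σ → LocInt w → LocInt σ →
        ApChar p w σ < ∞ →
        ∀ f : Rn n → ℝ≥0∞, Measurable f →
        ∀ t : ℝ≥0∞, 0 < t → t ≠ ∞ →
          (∫⁻ x in {x | t < dyadicM (fun y => f y * σ y) x}, w x)
            ≤ C * ApChar p w σ * t ^ (-p) * ∫⁻ x, (f x) ^ p * σ x := by
  refine ⟨1, one_ne_top, ?_⟩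
  intro w σ hwm hσm hwl hσl _hA f hf t ht ht'
  rw [one_mul]
  set g : Rn n → ℝ≥0∞ := fun y => f y * σ y with hg
  set A := ApChar p w σ with hA
  set Jtot := ∫⁻ x, (f x) ^ p * σ x with hJtot
  -- characterization of superlevel set
  have hiff : ∀ x : Rn n, t < dyadicM g x ↔
      ∃ km : ℤ × (Fin n → ℤ), x ∈ dcube n km.1 km.2 ∧ t < dAvg g (dcube n km.1 km.2) := by
    intro x
    rw [dyadicM, lt_iSup_iff]
    constructor
    · rintro ⟨Q, hQ⟩
      rw [lt_iSup_iff] at hQ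
      obtain ⟨⟨⟨k, m, rfl⟩, hxQ⟩, hQt⟩ := hQ
      exact ⟨(k, m), hxQ, hQt⟩
    · rintro ⟨⟨k, m⟩, hxQ, hQt⟩
      exact ⟨dcube n k m, lt_iSup_iff.mpr ⟨⟨isDyadicCube_dcube k m, hxQ⟩, hQt⟩⟩
  set Ω : Set (Rn n) := {x | t < dyadicM g x} with hΩdef
  have hΩeq : Ω = ⋃ (q : ℤ × (Fin n → ℤ)) (_ : t < dAvg g (dcube n q.1 q.2)), dcube n q.1 q.2 := by
    ext x
    simp only [hΩdef, mem_setOf_eq, mem_iUnion, hiff x]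
    exact ⟨fun ⟨km, h1, h2⟩ => ⟨km, h2, h1⟩, fun ⟨km, h1, h2⟩ => ⟨km, h2, h1⟩⟩
  have hΩmeas : MeasurableSet Ω := by
    rw [hΩeq]
    exact MeasurableSet.iUnion fun q => MeasurableSet.iUnion fun _ => measurableSet_dcube _ _
  set ΩN : ℕ → Set (Rn n) := fun N =>
    ⋃ (q : ℤ × (Fin n → ℤ)) (_ : -(N:ℤ) ≤ q.1 ∧ t < dAvg g (dcube n q.1 q.2)), dcube n q.1 q.2
    with hΩN
  have hΩNmeas : ∀ N, MeasurableSet (ΩN N) := fun N =>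
    MeasurableSet.iUnion fun q => MeasurableSet.iUnion fun _ => measurableSet_dcube _ _
  have hmono : Monotone ΩN := by
    intro N N' hNN'
    refine Set.iUnion_mono fun q => Set.iUnion_subset fun hq => ?_
    have h1 : -(N':ℤ) ≤ q.1 := le_trans (by omega : -(N':ℤ) ≤ -(N:ℤ)) hq.1
    exact Set.subset_iUnion_of_subset ⟨h1, hq.2⟩ subset_rfl
  have hunion : Ω = ⋃ N, ΩN N := by
    rw [hΩeq]
    ext x
    simp only [hΩN, mem_iUnion]
    constructor
    · rintro ⟨q, hq, hx⟩
      exact ⟨(-q.1).toNat, q, ⟨by omega, hq⟩, hx⟩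
    · rintro ⟨N, q, hq, hx⟩
      exact ⟨q, hq.2, hx⟩
  -- per-N bound
  have hNbound : ∀ N : ℕ, ∫⁻ x in ΩN N, w x ≤ A * t ^ (-p) * Jtot := by
    intro N
    set Sel : Set (ℤ × (Fin n → ℤ)) := {q | -(N:ℤ) ≤ q.1 ∧ t < dAvg g (dcube n q.1 q.2) ∧
      ∀ k', -(N:ℤ) ≤ k' → k' < q.1 → ∀ x ∈ dcube n q.1 q.2, ¬ (t < dAvg g (cubeOf k' x))}
      with hSel
    have cover : ΩN N ⊆ ⋃ q : Sel, dcube n q.1.1 q.1.2 := by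
      intro x hx
      simp only [hΩN, mem_iUnion] at hx
      obtain ⟨q0, ⟨hk0, ht0⟩, hx0⟩ := hx
      have hK : ∃ z : ℤ, (-(N:ℤ) ≤ z ∧ t < dAvg g (cubeOf z x)) := by
        refine ⟨q0.1, hk0, ?_⟩
        rwa [← eq_cubeOf_of_mem hx0]
      obtain ⟨k, ⟨hkN, hkt⟩, hkmin⟩ := Int.exists_least_of_bdd
        (P := fun z => -(N:ℤ) ≤ z ∧ t < dAvg g (cubeOf z x)) ⟨-(N:ℤ), fun z hz => hz.1⟩ hK
      have hSelmem : (k, fun i => ⌊(2:ℝ) ^ k * x i⌋) ∈ Sel := by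
        refine ⟨hkN, hkt, ?_⟩
        intro k' hk'N hk'lt y hy hyt
        have hsub : cubeOf k x ⊆ cubeOf k' y :=
          dcube_subset (le_of_lt hk'lt) (mem_cubeOf k' y) hy
        have hxmem : x ∈ cubeOf k' y := hsub (mem_cubeOf k x)
        have hcc : cubeOf k' y = cubeOf k' x := eq_cubeOf_of_mem hxmem
        rw [hcc] at hyt
        have := hkmin k' ⟨hk'N, hyt⟩
        omega
      exact mem_iUnion.mpr ⟨⟨(k, fun i => ⌊(2:ℝ) ^ k * x i⌋), hSelmem⟩, mem_cubeOf k x⟩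
    have hkey : ∀ a b : ℤ × (Fin n → ℤ), a ∈ Sel → b ∈ Sel → a.1 < b.1 →
        ∀ z, z ∈ dcube n a.1 a.2 → z ∈ dcube n b.1 b.2 → False := by
      intro a b ha hb hab z hza hzb
      exact hb.2.2 a.1 ha.1 hab z hzb (by rw [← eq_cubeOf_of_mem hza]; exact ha.2.1)
    have disj : Pairwise (Function.onFun Disjoint fun q : Sel => dcube n q.1.1 q.1.2) := by
      intro q q' hne
      refine Set.disjoint_left.mpr fun {z} hz hz' => ?_
      rcases lt_trichotomy q.1.1 q'.1.1 with hlt | heq | hgt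
      · exact hkey _ _ q.2 q'.2 hlt z hz hz'
      · refine hne ?_
        apply Subtype.ext
        refine Prod.ext heq ?_
        funext i
        rw [← mem_dcube.mp hz i, ← mem_dcube.mp hz' i, heq]
      · exact hkey _ _ q'.2 q.2 hgt z hz' hz
    calc ∫⁻ x in ΩN N, w x
        ≤ ∫⁻ x in ⋃ q : Sel, dcube n q.1.1 q.1.2, w x := lintegral_mono_set cover
      _ = ∑' q : Sel, ∫⁻ x in dcube n q.1.1 q.1.2, w x :=
          lintegral_iUnion (fun q => measurableSet_dcube _ _) disj _
      _ ≤ ∑' q : Sel, (A * t ^ (-p)) * ∫⁻ x in dcube n q.1.1 q.1.2, f x ^ p * σ x := by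
          refine ENNReal.tsum_le_tsum fun q => ?_
          have := percube hp hσm hf hwl hσl ht ht' q.2.2.1
          calc ∫⁻ x in dcube n q.1.1 q.1.2, w x
              ≤ ApChar p w σ * t ^ (-p) * ∫⁻ x in dcube n q.1.1 q.1.2, f x ^ p * σ x := this
            _ = (A * t ^ (-p)) * ∫⁻ x in dcube n q.1.1 q.1.2, f x ^ p * σ x := by rw [hA]
      _ = (A * t ^ (-p)) * ∑' q : Sel, ∫⁻ x in dcube n q.1.1 q.1.2, f x ^ p * σ x :=
          ENNReal.tsum_mul_left
      _ = (A * t ^ (-p)) * ∫⁻ x in ⋃ q : Sel, dcube n q.1.1 q.1.2, f x ^ p * σ x := by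
          rw [lintegral_iUnion (fun q => measurableSet_dcube _ _) disj]
      _ ≤ (A * t ^ (-p)) * Jtot :=
          mul_le_mul_right (setLIntegral_le_lintegral _ _) _
  -- conclude
  have hμ : ∀ s : Set (Rn n), MeasurableSet s →
      (volume.withDensity w) s = ∫⁻ x in s, w x := fun s hs => withDensity_apply w hs
  calc ∫⁻ x in Ω, w x = (volume.withDensity w) Ω := (hμ _ hΩmeas).symm
    _ = ⨆ N, (volume.withDensity w) (ΩN N) := by
        rw [hunion]; exact Directed.measure_iUnion hmono.directed_le
    _ ≤ A * t ^ (-p) * Jtot := by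
        refine iSup_le fun N => ?_
        rw [hμ _ (hΩNmeas N)]
        exact hNbound N

end Paper
end
end
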